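/- arXiv:2508.14945 — 7 statements merged into one kernel-verified Lean document; each statement's English description precedes it below -/
import Mathlib

section
/- For every linear subspace $W \subseteq K^n$ and every $0 \le k \le n$, the dimension $\dim_K(W \cap Z_k)$ equals the number of elements of the pivot set $P(W)$ that are strictly greater than $k$. -/
def zeroBelow (K : Type*) [Field K] (n j : ℕ) : Submodule K (Fin n → K) where
  carrier := {v | ∀ i : Fin n, (i : ℕ) < j → v i = 0}
  add_mem' := by
    intro a b ha hb i hi
    simp [ha i hi, hb i hi]
  zero_mem' := by
    intro i hi
    rfl
  smul_mem' := by
    intro c a ha i hi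
    simp [ha i hi]

def pivotSet {K : Type*} [Field K] {n : ℕ} (W : Submodule K (Fin n → K)) : Set (Fin n) :=
  {k | ∃ w ∈ W, w k ≠ 0 ∧ ∀ i < k, w i = 0}

open Classical in
lemma pivot_step {K : Type*} [Field K] {n : ℕ} (W : Submodule K (Fin n → K)) (k : ℕ) (hk : k < n) :
    Module.finrank K ↥(W ⊓ zeroBelow K n k) =
      Module.finrank K ↥(W ⊓ zeroBelow K n (k+1)) +
      (if (⟨k, hk⟩ : Fin n) ∈ pivotSet W then 1 else 0) := by
  set κ : Fin n := ⟨k, hk⟩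
  set φ : ↥(W ⊓ zeroBelow K n k) →ₗ[K] K :=
    (LinearMap.proj κ).comp (W ⊓ zeroBelow K n k).subtype with hφ
  have hker : LinearMap.ker φ =
      Submodule.comap (W ⊓ zeroBelow K n k).subtype (W ⊓ zeroBelow K n (k+1)) := by
    ext v
    simp only [LinearMap.mem_ker, Submodule.mem_comap, Submodule.coe_subtype,
      Submodule.mem_inf, hφ, LinearMap.comp_apply, LinearMap.proj_apply]
    constructor
    · intro h
      refine ⟨v.2.1, fun i hi => ?_⟩
      rcases Nat.lt_or_ge (i : ℕ) k with hik | hik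
      · exact v.2.2 i hik
      · have : i = κ := Fin.ext (le_antisymm (Nat.lt_succ_iff.mp hi) hik)
        rwa [this]
    · intro h
      exact h.2 κ (Nat.lt_succ_self k)
  have hle : W ⊓ zeroBelow K n (k+1) ≤ W ⊓ zeroBelow K n k := by
    intro v hv
    exact ⟨hv.1, fun i hi => hv.2 i (Nat.lt_succ_of_lt hi)⟩
  have hkerrank : Module.finrank K ↥(LinearMap.ker φ) =
      Module.finrank K ↥(W ⊓ zeroBelow K n (k+1)) := by
    rw [hker]
    exact LinearEquiv.finrank_eq (Submodule.comapSubtypeEquivOfLe hle)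
  have hrank := LinearMap.finrank_range_add_finrank_ker φ
  rw [hkerrank] at hrank
  rw [← hrank, Nat.add_comm]
  congr 1
  by_cases hp : κ ∈ pivotSet W
  · rw [if_pos hp]
    obtain ⟨w, hwW, hwk, hwlt⟩ := hp
    have hwZ : w ∈ W ⊓ zeroBelow K n k := ⟨hwW, fun i hi => hwlt i hi⟩
    have hrt : LinearMap.range φ = ⊤ := by
      rw [LinearMap.range_eq_top]
      intro c
      refine ⟨(c * (w κ)⁻¹) • ⟨w, hwZ⟩, ?_⟩
      simp only [hφ, LinearMap.comp_apply, Submodule.coe_subtype, SetLike.val_smul,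
        Pi.smul_apply, LinearMap.proj_apply, smul_eq_mul]
      field_simp
    rw [hrt, finrank_top]
    exact Module.finrank_self K
  · rw [if_neg hp]
    have hrb : LinearMap.range φ = ⊥ := by
      rw [LinearMap.range_eq_bot]
      ext v
      simp only [hφ, LinearMap.comp_apply, LinearMap.proj_apply, LinearMap.zero_apply,
        Submodule.coe_subtype]
      by_contra h
      exact hp ⟨v.1, v.2.1, h, fun i hi => v.2.2 i hi⟩
    rw [hrb, finrank_bot]

lemma pivot_base {K : Type*} [Field K] {n : ℕ} (W : Submodule K (Fin n → K)) :
    Module.finrank K ↥(W ⊓ zeroBelow K n n) =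
      {p ∈ pivotSet W | n < (p : ℕ) + 1}.ncard := by
  have h1 : W ⊓ zeroBelow K n n = ⊥ := by
    rw [eq_bot_iff]
    intro v hv
    have : v = 0 := funext fun i => hv.2 i i.2
    simp [this]
  have h2 : {p ∈ pivotSet W | n < (p : ℕ) + 1} = ∅ := by
    ext p
    simp only [Set.mem_setOf_eq, Set.mem_empty_iff_false, iff_false, not_and]
    intro _
    have := p.2
    omega
  rw [h1, h2, Set.ncard_empty, finrank_bot]

/-- `dim (W ∩ Z_k)` equals the number of pivots of `W` strictly greater than `k`
(pivots counted in one-based indexing: the pivot at zero-based index `p` is `p + 1`). -/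
theorem finrank_inf_zeroBelow_eq_card_pivots_gt (K : Type*) [Field K] (n : ℕ)
    (W : Submodule K (Fin n → K)) (k : ℕ) (hk : k ≤ n) :
    Module.finrank K ↥(W ⊓ zeroBelow K n k) =
      {p ∈ pivotSet W | k < (p : ℕ) + 1}.ncard := by
  classical
  obtain ⟨m, hm⟩ : ∃ m, n ≤ k + m := ⟨n, Nat.le_add_left n k⟩
  induction m generalizing k with
  | zero =>
    have hkn : k = n := le_antisymm hk (by simpa using hm)
    rw [hkn]
    exact pivot_base W
  | succ m ih =>
    rcases Nat.lt_or_ge k n with hkn | hkn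
    · have ihk := ih (k + 1) hkn (by omega)
      rw [pivot_step W k hkn, ihk]
      have hsplit : {p ∈ pivotSet W | k < (p : ℕ) + 1} =
          if (⟨k, hkn⟩ : Fin n) ∈ pivotSet W
          then insert (⟨k, hkn⟩ : Fin n) {p ∈ pivotSet W | k + 1 < (p : ℕ) + 1}
          else {p ∈ pivotSet W | k + 1 < (p : ℕ) + 1} := by
        by_cases hp : (⟨k, hkn⟩ : Fin n) ∈ pivotSet W
        · rw [if_pos hp]
          ext p
          simp only [Set.mem_setOf_eq, Set.mem_insert_iff]
          constructor
          · rintro ⟨h1, h2⟩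
            rcases Nat.lt_or_ge k (p : ℕ) with h | h
            · exact Or.inr ⟨h1, by omega⟩
            · exact Or.inl (Fin.ext (by simp only [Fin.val_mk] at *; omega))
          · rintro (rfl | ⟨h1, h2⟩)
            · exact ⟨hp, by simp only [Fin.val_mk] at *; omega⟩
            · exact ⟨h1, by omega⟩
        · rw [if_neg hp]
          ext p
          simp only [Set.mem_setOf_eq]
          constructor
          · rintro ⟨h1, h2⟩
            refine ⟨h1, ?_⟩
            rcases Nat.lt_or_ge k (p : ℕ) with h | h
            · omega
            · have hpk : p = (⟨k, hkn⟩ : Fin n) := Fin.ext (by simp only [Fin.val_mk] at *; omega)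
              exact absurd (hpk ▸ h1) hp
          · rintro ⟨h1, h2⟩
            exact ⟨h1, by omega⟩
      rw [hsplit]
      by_cases hp : (⟨k, hkn⟩ : Fin n) ∈ pivotSet W
      · rw [if_pos hp, if_pos hp,
          Set.ncard_insert_of_notMem (by simp) (Set.toFinite _)]
      · rw [if_neg hp, if_neg hp, Nat.add_zero]
    · have hkn' : k = n := le_antisymm hk hkn
      rw [hkn']
      exact pivot_base W
end

section
/- If $(w_1, \dots, w_d)$ is a PBW-basis of a subspace $W \subseteq K^n$ with pivot positions $s_1 < \dots < s_d$, then for each $1 \le i \le d$, the index $s_i$ is the largest integer $k$ between $1$ and $n$ such that $\dim_K(W \cap Z_{k-1}) \ge d - i + 1$. -/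
/-- `(w 0, …, w (d-1))` is a PBW-basis of `W ⊆ K^n` with pivot positions `s 0 < … < s (d-1)`:
it is an ordered basis of `W`, each `w i` has first nonzero entry `1` located at position
`s i`, and the pivot positions are strictly increasing. -/
def IsPBWBasis {K : Type*} [Field K] {n d : ℕ} (W : Submodule K (Fin n → K))
    (w : Fin d → Fin n → K) (s : Fin d → Fin n) : Prop :=
  (∀ i, w i ∈ W) ∧ LinearIndependent K w ∧ Submodule.span K (Set.range w) = W ∧
    StrictMono s ∧ ∀ i, w i (s i) = 1 ∧ ∀ j < s i, w i j = 0

lemma mem_zeroBelow {K : Type*} [Field K] {n j : ℕ} {v : Fin n → K} :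
    v ∈ zeroBelow K n j ↔ ∀ i : Fin n, (i : ℕ) < j → v i = 0 := Iff.rfl

/-- For a PBW-basis `(w 0, …, w (d-1))` of `W` with pivot positions `s`, the one-based
pivot position `(s i : ℕ) + 1` of the `i`-th basis vector (whose one-based index is
`(i : ℕ) + 1`) is the largest integer `k` with `1 ≤ k ≤ n` such that
`dim (W ∩ Z (k-1)) ≥ d - ((i : ℕ) + 1) + 1 = d - (i : ℕ)`. -/
theorem pbwBasis_pivot_isGreatest (K : Type*) [Field K] (n d : ℕ)
    (W : Submodule K (Fin n → K)) (w : Fin d → Fin n → K) (s : Fin d → Fin n)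
    (hw : IsPBWBasis W w s) (i : Fin d) :
    IsGreatest
      {k : ℕ | 1 ≤ k ∧ k ≤ n ∧
        d - (i : ℕ) ≤ Module.finrank K ↥(W ⊓ zeroBelow K n (k - 1))}
      ((s i : ℕ) + 1) := by
  classical
  obtain ⟨hmem, hli, hspan, hmono, hpiv⟩ := hw
  constructor
  · refine ⟨by omega, by have := (s i).isLt; omega, ?_⟩
    have hd : ((s i : ℕ) + 1) - 1 = (s i : ℕ) := rfl
    rw [hd]
    -- the vectors w i, w (i+1), ..., w (d-1) lie in W ⊓ zeroBelow (s i)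
    set e : Fin (d - (i : ℕ)) → Fin d := fun j => ⟨(i : ℕ) + j, by omega⟩ with he
    have einj : Function.Injective e := by
      intro a b h
      have := congrArg Fin.val h
      simp only [he] at this
      exact Fin.ext (by omega)
    have hmem2 : ∀ j, w (e j) ∈ W ⊓ zeroBelow K n (s i : ℕ) := by
      intro j
      refine Submodule.mem_inf.mpr ⟨hmem _, ?_⟩
      intro m hm
      refine (hpiv (e j)).2 m ?_
      have hle : s i ≤ s (e j) := hmono.monotone (by
        simp only [Fin.le_def, he]; exact Nat.le_add_right _ _)
      exact lt_of_lt_of_le (Fin.lt_def.mpr hm) hle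
    set u : Fin (d - (i : ℕ)) → ↥(W ⊓ zeroBelow K n (s i : ℕ)) :=
      fun j => ⟨w (e j), hmem2 j⟩ with hu
    have hui : LinearIndependent K u :=
      LinearIndependent.of_comp ((W ⊓ zeroBelow K n (s i : ℕ)).subtype)
        (by exact hli.comp e einj)
    have := hui.fintype_card_le_finrank
    simpa using this
  · rintro k ⟨hk1, hkn, hdim⟩
    by_contra hlt
    push_neg at hlt
    have hsik : (s i : ℕ) < k - 1 := by omega
    set T : Finset (Fin n → K) := Finset.image w (Finset.Ioi i) with hT
    have hle : W ⊓ zeroBelow K n (k - 1) ≤ Submodule.span K (T : Set (Fin n → K)) := by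
      rintro v hv
      rw [Submodule.mem_inf] at hv
      obtain ⟨hvW, hvZ⟩ := hv
      rw [← hspan] at hvW
      obtain ⟨c, hc⟩ := (Submodule.mem_span_range_iff_exists_fun K).mp hvW
      have hzero : ∀ N : ℕ, ∀ l : Fin d, (l : ℕ) = N → l ≤ i → c l = 0 := by
        intro N
        induction N using Nat.strong_induction_on with
        | _ N IH =>
          intro l hlN hli'
          have hvsl : v (s l) = 0 := by
            refine hvZ (s l) ?_
            have hsl : (s l : ℕ) ≤ (s i : ℕ) := by
              rcases eq_or_lt_of_le hli' with h | h
              · rw [h]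
              · exact le_of_lt (hmono h)
            omega
          have hc' := congrFun hc (s l)
          rw [Finset.sum_apply] at hc'
          simp only [Pi.smul_apply, smul_eq_mul] at hc'
          have hsum : ∑ m, c m * w m (s l) = c l := by
            rw [Finset.sum_eq_single l]
            · rw [(hpiv l).1, mul_one]
            · intro m _ hm
              rcases lt_or_gt_of_ne hm with h | h
              · rw [IH (m : ℕ) (by omega) m rfl (le_trans (le_of_lt h) hli'), zero_mul]
              · rw [(hpiv m).2 (s l) (hmono h), mul_zero]
            · simp
          rw [hsum] at hc'
          rw [hc', hvsl]
      rw [← hc]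
      refine Submodule.sum_mem _ ?_
      intro m _
      by_cases h : i < m
      · refine Submodule.smul_mem _ _ (Submodule.subset_span ?_)
        simp only [hT, Finset.coe_image, Set.mem_image, Finset.mem_coe, Finset.mem_Ioi]
        exact ⟨m, h, rfl⟩
      · rw [hzero (m : ℕ) m rfl (not_lt.mp h), zero_smul]
        exact Submodule.zero_mem _
    have h1 : Module.finrank K ↥(W ⊓ zeroBelow K n (k - 1)) ≤
        Module.finrank K ↥(Submodule.span K (T : Set (Fin n → K))) :=
      Submodule.finrank_mono hle
    have h2 : Module.finrank K ↥(Submodule.span K (T : Set (Fin n → K))) ≤ d - 1 - (i : ℕ) := by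
      have hcard := finrank_span_finset_le_card (R := K) T
      rw [Set.finrank] at hcard
      refine le_trans hcard ?_
      rw [hT]
      exact le_trans Finset.card_image_le (le_of_eq (Fin.card_Ioi i))
    have hi := i.isLt
    omega
end

section
/- Let $U, V \subseteq K^n$ be linear subspaces with $U \cap V = \{0\}$ and $P(U) \cap P(V) = \emptyset$. Then $P(U + V) = P(U) \cup P(V)$. -/
/-- Every nonzero vector has a pivot index. -/
lemma exists_pivot_aux {K : Type*} [Field K] {n : ℕ} {u : Fin n → K} (h : u ≠ 0) :
    ∃ p, u p ≠ 0 ∧ ∀ i < p, u i = 0 := by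
  have hne : {i : Fin n | u i ≠ 0}.Nonempty := by
    rw [Function.ne_iff] at h
    obtain ⟨i, hi⟩ := h
    exact ⟨i, hi⟩
  obtain ⟨m, hm, hmin⟩ := (wellFounded_lt (α := Fin n)).has_min _ hne
  exact ⟨m, hm, fun i hi => by by_contra h'; exact hmin i h' hi⟩

/-- If `U ∩ V = 0` and the pivot sets of `U` and `V` are disjoint, then the pivot set of
`U + V` is the union of the pivot sets. -/
theorem pivotSet_sup_of_disjoint (K : Type*) [Field K] (n : ℕ)
    (U V : Submodule K (Fin n → K)) (hUV : U ⊓ V = ⊥)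
    (hP : pivotSet U ∩ pivotSet V = ∅) :
    pivotSet (U ⊔ V) = pivotSet U ∪ pivotSet V := by
  ext k
  constructor
  · rintro ⟨w, hw, hk, hlt⟩
    obtain ⟨u, hu, v, hv, rfl⟩ := Submodule.mem_sup.mp hw
    by_cases hu0 : u = 0
    · subst hu0
      right
      refine ⟨v, hv, ?_, ?_⟩
      · simpa using hk
      · intro i hi; simpa using hlt i hi
    by_cases hv0 : v = 0
    · subst hv0
      left
      refine ⟨u, hu, ?_, ?_⟩
      · simpa using hk
      · intro i hi; simpa using hlt i hi
    obtain ⟨p, hp, hplt⟩ := exists_pivot_aux hu0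
    obtain ⟨q, hq, hqlt⟩ := exists_pivot_aux hv0
    have hpq : p ≠ q := by
      intro h
      have : p ∈ pivotSet U ∩ pivotSet V :=
        ⟨⟨u, hu, hp, hplt⟩, ⟨v, hv, h ▸ hq, h ▸ hqlt⟩⟩
      rw [hP] at this
      exact this
    rcases hpq.lt_or_gt with hlt' | hlt'
    · -- p < q : pivot of u+v is p
      have hwp : (u + v) p ≠ 0 := by
        have : v p = 0 := hqlt p hlt'
        simpa [this] using hp
      have hwlt : ∀ i < p, (u + v) i = 0 := fun i hi => by
        simp [hplt i hi, hqlt i (hi.trans hlt')]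
      have hkp : k = p := by
        rcases lt_trichotomy k p with h | h | h
        · exact absurd (hwlt k h) hk
        · exact h
        · exact absurd (hlt p h) hwp
      subst hkp
      exact Or.inl ⟨u, hu, hp, hplt⟩
    · -- q < p : pivot of u+v is q
      have hwq : (u + v) q ≠ 0 := by
        have : u q = 0 := hplt q hlt'
        simpa [this] using hq
      have hwlt : ∀ i < q, (u + v) i = 0 := fun i hi => by
        simp [hqlt i hi, hplt i (hi.trans hlt')]
      have hkq : k = q := by
        rcases lt_trichotomy k q with h | h | h
        · exact absurd (hwlt k h) hk
        · exact h
        · exact absurd (hlt q h) hwq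
      subst hkq
      exact Or.inr ⟨v, hv, hq, hqlt⟩
  · rintro (⟨w, hw, hk, hlt⟩ | ⟨w, hw, hk, hlt⟩)
    · exact ⟨w, Submodule.mem_sup_left hw, hk, hlt⟩
    · exact ⟨w, Submodule.mem_sup_right hw, hk, hlt⟩
end

section
/- Let $U, V \subseteq K^n$ be linear subspaces with $P(U) \cap P(V) \neq \emptyset$, and let $k = \min(P(U) \cap P(V))$. Then every element of $P(U + V)$ that is at most $k$ lies in $P(U) \cup P(V)$; consequently $P(U+V) \cap \{1, \dots, k\} = (P(U) \cup P(V)) \cap \{1, \dots, k\}$. -/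
/-- If `k` is the smallest common pivot of `U` and `V`, then every pivot of `U + V`
that is at most `k` is a pivot of `U` or of `V`; consequently the pivot sets of `U + V`
and of `U ∪ V` agree on indices at most `k`. -/
theorem pivotSet_sup_below_least_common (K : Type*) [Field K] (n : ℕ)
    (U V : Submodule K (Fin n → K)) (k : Fin n)
    (hk : IsLeast (pivotSet U ∩ pivotSet V) k) :
    (∀ j ∈ pivotSet (U ⊔ V), j ≤ k → j ∈ pivotSet U ∪ pivotSet V) ∧
      pivotSet (U ⊔ V) ∩ {j | j ≤ k} = (pivotSet U ∪ pivotSet V) ∩ {j | j ≤ k} := by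
  have hmono : ∀ (W W' : Submodule K (Fin n → K)), W ≤ W' →
      pivotSet W ⊆ pivotSet W' := by
    rintro W W' h j ⟨w, hw, h1, h2⟩
    exact ⟨w, h hw, h1, h2⟩
  have main : ∀ j ∈ pivotSet (U ⊔ V), j ≤ k → j ∈ pivotSet U ∪ pivotSet V := by
    intro j hj hjk
    obtain ⟨w, hw, hwj, hwlt⟩ := hj
    rw [Submodule.mem_sup] at hw
    obtain ⟨u, hu, v, hv, rfl⟩ := hw
    by_cases hbelow : ∀ i < j, u i = 0
    · have hvbelow : ∀ i < j, v i = 0 := by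
        intro i hi
        have h1 := hwlt i hi
        have h2 := hbelow i hi
        simp only [Pi.add_apply, h2, zero_add] at h1
        exact h1
      rcases eq_or_ne (u j) 0 with h0 | h0
      · right
        refine ⟨v, hv, ?_, hvbelow⟩
        simpa [Pi.add_apply, h0] using hwj
      · exact Or.inl ⟨u, hu, h0, hbelow⟩
    · exfalso
      push_neg at hbelow
      classical
      set S : Finset (Fin n) := Finset.univ.filter (fun i => i < j ∧ u i ≠ 0) with hS
      have hne : S.Nonempty := by
        obtain ⟨i, hi1, hi2⟩ := hbelow
        exact ⟨i, by simp [hS, hi1, hi2]⟩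
      set i0 := S.min' hne with hi0
      have hi0mem : i0 ∈ S := S.min'_mem hne
      simp only [hS, Finset.mem_filter, Finset.mem_univ, true_and] at hi0mem
      obtain ⟨hi0j, hui0⟩ := hi0mem
      have hubelow : ∀ i < i0, u i = 0 := by
        intro i hi
        by_contra h
        have : i ∈ S := by simp [hS, hi.trans hi0j, h]
        exact absurd (S.min'_le i this) (not_le.mpr hi)
      have hvi0 : v i0 = -(u i0) := by
        have h1 := hwlt i0 hi0j
        simp only [Pi.add_apply] at h1
        exact eq_neg_of_add_eq_zero_right h1
      have hvbelow : ∀ i < i0, v i = 0 := by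
        intro i hi
        have h1 := hwlt i (hi.trans hi0j)
        have h2 := hubelow i hi
        simp only [Pi.add_apply, h2, zero_add] at h1
        exact h1
      have hi0U : i0 ∈ pivotSet U := ⟨u, hu, hui0, hubelow⟩
      have hi0V : i0 ∈ pivotSet V := ⟨v, hv, by simp [hvi0, hui0], hvbelow⟩
      have := hk.2 ⟨hi0U, hi0V⟩
      exact absurd (this.trans_lt (hi0j.trans_le hjk)) (lt_irrefl _)
  refine ⟨main, ?_⟩
  ext j
  simp only [Set.mem_inter_iff, Set.mem_setOf_eq, Set.mem_union]
  constructor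
  · rintro ⟨h1, h2⟩
    exact ⟨main j h1 h2, h2⟩
  · rintro ⟨h1, h2⟩
    refine ⟨?_, h2⟩
    rcases h1 with h | h
    · exact hmono U (U ⊔ V) le_sup_left h
    · exact hmono V (U ⊔ V) le_sup_right h
end

section
/- Let $U, V \subseteq K^n$ be linear subspaces with $U \cap V = \{0\}$ and $P(U) \cap P(V) \neq \emptyset$, and let $k = \min(P(U) \cap P(V))$. Then for every $j < k$, the index $j$ belongs to at most one of $P(U)$ and $P(V)$, and $j \in P(U+V)$ if and only if $j \in P(U) \cup P(V)$; moreover the multiplicity of $k$ in the pivot multiset of $U+V$ (which is $1$, since $k \in P(U+V)$ and multiplicities in a pivot set are at most $1$) is strictly smaller than its multiplicity in the multiset sum of $P(U)$ and $P(V)$ (which is $2$). -/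
/-- The pivot multiset of a subspace: the pivot set regarded as a multiset, each element
with multiplicity one. -/
noncomputable def pivotMultiset {K : Type*} [Field K] {n : ℕ}
    (W : Submodule K (Fin n → K)) : Multiset (Fin n) :=
  (Set.toFinite (pivotSet W)).toFinset.val

lemma exists_lead {K : Type*} [Field K] {n : ℕ} (u : Fin n → K) (hu : u ≠ 0) :
    ∃ a, u a ≠ 0 ∧ ∀ i < a, u i = 0 := by
  have hS : {i : Fin n | u i ≠ 0}.Nonempty := by
    by_contra h
    exact hu (funext fun i => by
      by_contra hi
      exact h ⟨i, hi⟩)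
  obtain ⟨a, ha, hmin⟩ := (wellFounded_lt (α := Fin n)).has_min _ hS
  exact ⟨a, ha, fun i hi => by by_contra h; exact hmin i h hi⟩

/-- Let `U ∩ V = 0` and let `k` be the least common pivot of `U` and `V`. Then below `k`
each index belongs to at most one of `P U`, `P V`, and is a pivot of `U + V` iff it is a
pivot of `U` or `V`; moreover the multiplicity of `k` in the pivot multiset of `U + V`
is strictly smaller than its multiplicity in the multiset sum of the pivot multisets of
`U` and `V`. -/
theorem pivot_count_drops (K : Type*) [Field K] (n : ℕ)
    (U V : Submodule K (Fin n → K)) (hUV : U ⊓ V = ⊥) (k : Fin n)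
    (hk : IsLeast (pivotSet U ∩ pivotSet V) k) :
    (∀ j < k, ¬(j ∈ pivotSet U ∧ j ∈ pivotSet V)) ∧
      (∀ j < k, (j ∈ pivotSet (U ⊔ V) ↔ j ∈ pivotSet U ∪ pivotSet V)) ∧
      Multiset.count k (pivotMultiset (U ⊔ V)) <
        Multiset.count k (pivotMultiset U + pivotMultiset V) := by
  refine ⟨?_, ?_, ?_⟩
  · intro j hj ⟨h1, h2⟩
    exact absurd (hk.2 ⟨h1, h2⟩) (not_le.mpr hj)
  · intro j hj
    constructor
    · rintro ⟨w, hw, hwj, hwlt⟩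
      obtain ⟨u, hu, v, hv, rfl⟩ := Submodule.mem_sup.mp hw
      by_cases hu0 : u = 0
      · right
        refine ⟨v, hv, ?_, ?_⟩
        · simpa [hu0] using hwj
        · intro i hi; have := hwlt i hi; simpa [hu0] using this
      by_cases hv0 : v = 0
      · left
        refine ⟨u, hu, ?_, ?_⟩
        · simpa [hv0] using hwj
        · intro i hi; have := hwlt i hi; simpa [hv0] using this
      obtain ⟨a, ha, halt⟩ := exists_lead u hu0
      obtain ⟨b, hb, hblt⟩ := exists_lead v hv0
      rcases lt_trichotomy a b with hab | hab | hab
      · -- j = a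
        have hja : a ≤ j := by
          by_contra h
          push_neg at h
          apply hwj
          simp [Pi.add_apply, halt j h, hblt j (h.trans hab)]
        have haj : j ≤ a := by
          by_contra h
          push_neg at h
          have := hwlt a h
          simp only [Pi.add_apply] at this
          rw [hblt a hab] at this
          simp at this
          exact ha this
        have : j = a := le_antisymm haj hja
        subst this
        left
        have hbj : v j = 0 := hblt j hab
        refine ⟨u, hu, ?_, halt⟩
        intro h0
        apply hwj
        simp [Pi.add_apply, h0, hbj]
      · subst hab
        have haj : a ≤ j := by
          by_contra h
          push_neg at h
          apply hwj
          simp [Pi.add_apply, halt j h, hblt j h]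
        have hkU : a ∈ pivotSet U := ⟨u, hu, ha, halt⟩
        have hkV : a ∈ pivotSet V := ⟨v, hv, hb, hblt⟩
        have := hk.2 ⟨hkU, hkV⟩
        exact absurd (this.trans_lt (haj.trans_lt hj)) (lt_irrefl k)
      · -- j = b
        have hja : b ≤ j := by
          by_contra h
          push_neg at h
          apply hwj
          simp [Pi.add_apply, hblt j h, halt j (h.trans hab)]
        have haj : j ≤ b := by
          by_contra h
          push_neg at h
          have := hwlt b h
          simp only [Pi.add_apply] at this
          rw [halt b hab] at this
          simp at this
          exact hb this
        have : j = b := le_antisymm haj hja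
        subst this
        right
        have hbj : u j = 0 := halt j hab
        refine ⟨v, hv, ?_, hblt⟩
        intro h0
        apply hwj
        simp [Pi.add_apply, h0, hbj]
    · rintro (⟨w, hw, h1, h2⟩ | ⟨w, hw, h1, h2⟩)
      · exact ⟨w, Submodule.mem_sup_left hw, h1, h2⟩
      · exact ⟨w, Submodule.mem_sup_right hw, h1, h2⟩
  · have hkU : k ∈ pivotSet U := hk.1.1
    have hkV : k ∈ pivotSet V := hk.1.2
    have c1 : Multiset.count k (pivotMultiset U) = 1 :=
      Multiset.count_eq_one_of_mem (Set.toFinite (pivotSet U)).toFinset.nodup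
        ((Set.Finite.mem_toFinset _).mpr hkU)
    have c2 : Multiset.count k (pivotMultiset V) = 1 :=
      Multiset.count_eq_one_of_mem (Set.toFinite (pivotSet V)).toFinset.nodup
        ((Set.Finite.mem_toFinset _).mpr hkV)
    have c3 : Multiset.count k (pivotMultiset (U ⊔ V)) ≤ 1 :=
      Multiset.nodup_iff_count_le_one.mp (Set.toFinite (pivotSet (U ⊔ V))).toFinset.nodup k
    rw [Multiset.count_add, c1, c2]
    omega
end

section
/- Let $l_1$, $m$, and $l_2$ be lists of natural numbers, and let $m'$ denote $m$ sorted into nondecreasing order. Then the number of inversions of the concatenation $l_1 \mathbin{+\!\!+} m' \mathbin{+\!\!+} l_2$ is at most the number of inversions of $l_1 \mathbin{+\!\!+} m \mathbin{+\!\!+} l_2$. -/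
/-- The number of inversions of a list `l` of natural numbers: the number of pairs of
positions `(i, j)` with `i < j` and `l[i] > l[j]`. -/
def inversions (l : List ℕ) : ℕ :=
  (Finset.univ.filter
    (fun p : Fin l.length × Fin l.length => p.1 < p.2 ∧ l.get p.2 < l.get p.1)).card

/-- Recursive version of inversion count. -/
def invRec : List ℕ → ℕ
  | [] => 0
  | x :: l => l.countP (fun y => y < x) + invRec l

/-- Cross inversions between two lists. -/
def cross (a b : List ℕ) : ℕ := (a.map fun x => b.countP (fun y => y < x)).sum

lemma countP_eq_sum (p : ℕ → Bool) (l : List ℕ) :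
    l.countP p = ∑ j : Fin l.length, if p (l.get j) then 1 else 0 := by
  induction l with
  | nil => simp
  | cons x l ih =>
    rw [List.countP_cons, ih]
    simp only [List.length_cons] at *
    rw [Fin.sum_univ_succ]
    simp only [List.get_cons_zero]
    rw [add_comm]
    congr 1

lemma inversions_eq_sum (l : List ℕ) :
    inversions l = ∑ p : Fin l.length × Fin l.length,
      if p.1 < p.2 ∧ l.get p.2 < l.get p.1 then 1 else 0 := by
  rw [inversions, Finset.card_filter]

lemma inversions_cons (x : ℕ) (l : List ℕ) :
    inversions (x :: l) = l.countP (fun y => y < x) + inversions l := by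
  rw [inversions_eq_sum, inversions_eq_sum, Fintype.sum_prod_type,
    countP_eq_sum, Fintype.sum_prod_type]
  simp only [List.length_cons]
  rw [Fin.sum_univ_succ]
  congr 1
  · rw [Fin.sum_univ_succ]
    simp
  · apply Finset.sum_congr rfl
    intro i _
    rw [Fin.sum_univ_succ]
    simp [Fin.succ_lt_succ_iff]

lemma inversions_eq_invRec (l : List ℕ) : inversions l = invRec l := by
  induction l with
  | nil => simp [inversions, invRec]
  | cons x l ih => rw [inversions_cons, invRec, ih]

lemma invRec_append (a b : List ℕ) :
    invRec (a ++ b) = invRec a + invRec b + cross a b := by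
  induction a with
  | nil => simp [invRec, cross]
  | cons x a ih =>
    simp only [List.cons_append, invRec, List.append_eq, List.countP_append, ih, cross,
      List.map_cons, List.sum_cons]
    ring

lemma cross_append_left (a b c : List ℕ) : cross (a ++ b) c = cross a c + cross b c := by
  simp [cross]

lemma cross_perm_left {m m' : List ℕ} (h : m'.Perm m) (b : List ℕ) :
    cross m' b = cross m b :=
  (h.map _).sum_eq

lemma cross_perm_right {m m' : List ℕ} (h : m'.Perm m) (a : List ℕ) :
    cross a m' = cross a m := by
  unfold cross
  congr 1
  apply List.map_congr_left
  intro x _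
  exact h.countP_eq _

lemma invRec_sorted_eq_zero {l : List ℕ} (h : l.Pairwise (· ≤ ·)) : invRec l = 0 := by
  induction l with
  | nil => rfl
  | cons x l ih =>
    rw [invRec, ih h.of_cons, List.countP_eq_zero.2, add_zero]
    intro y hy
    simp only [decide_eq_true_eq]
    exact not_lt.2 (List.rel_of_pairwise_cons h hy)

/-- Sorting the middle part of a concatenation into nondecreasing order does not
increase the number of inversions. Here `m'` is `m` sorted, i.e. a permutation of `m`
that is sorted with respect to `≤`. -/
theorem inversions_sort_middle_le (l₁ m l₂ m' : List ℕ)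
    (hperm : m'.Perm m) (hsorted : m'.Pairwise (· ≤ ·)) :
    inversions (l₁ ++ m' ++ l₂) ≤ inversions (l₁ ++ m ++ l₂) := by
  rw [inversions_eq_invRec, inversions_eq_invRec, invRec_append, invRec_append,
    invRec_append, invRec_append, cross_append_left, cross_append_left,
    cross_perm_right hperm, cross_perm_left hperm, invRec_sorted_eq_zero hsorted]
  omega
end

section
/- Let $U, V \subseteq K^n$ be linear subspaces with $U \cap V = \{0\}$ such that every element of $P(U)$ is strictly smaller than every element of $P(V)$. If $(u_1, \dots, u_a)$ is a PBW-basis of $U$ and $(v_1, \dots, v_b)$ is a PBW-basis of $V$, then the concatenation $(u_1, \dots, u_a, v_1, \dots, v_b)$ is a PBW-basis of $U + V$. -/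
lemma append_eq_elim_comp {α : Type*} {a b : ℕ} (u : Fin a → α) (v : Fin b → α) :
    Fin.append u v = Sum.elim u v ∘ finSumFinEquiv.symm := by
  funext i
  induction i using Fin.addCases with
  | left i => simp [Fin.append_left]
  | right i => simp [Fin.append_right]

/-- If `U ∩ V = 0` and every pivot of `U` is strictly smaller than every pivot of `V`,
then concatenating a PBW-basis of `U` with a PBW-basis of `V` gives a PBW-basis of `U + V`. -/
theorem pbwBasis_append (K : Type*) [Field K] (n a b : ℕ)
    (U V : Submodule K (Fin n → K)) (hUV : U ⊓ V = ⊥)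
    (hlt : ∀ ku ∈ pivotSet U, ∀ kv ∈ pivotSet V, ku < kv)
    (u : Fin a → Fin n → K) (su : Fin a → Fin n) (hu : IsPBWBasis U u su)
    (v : Fin b → Fin n → K) (sv : Fin b → Fin n) (hv : IsPBWBasis V v sv) :
    IsPBWBasis (U ⊔ V) (Fin.append u v) (Fin.append su sv) := by
  obtain ⟨huU, huli, huspan, husm, hupiv⟩ := hu
  obtain ⟨hvV, hvli, hvspan, hvsm, hvpiv⟩ := hv
  have hsuv : ∀ (i : Fin a) (j : Fin b), su i < sv j := by
    intro i j
    refine hlt _ ⟨u i, huU i, ?_, (hupiv i).2⟩ _ ⟨v j, hvV j, ?_, (hvpiv j).2⟩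
    · rw [(hupiv i).1]; exact one_ne_zero
    · rw [(hvpiv j).1]; exact one_ne_zero
  refine ⟨?_, ?_, ?_, ?_, ?_⟩
  · intro i
    induction i using Fin.addCases with
    | left i => rw [Fin.append_left]; exact Submodule.mem_sup_left (huU i)
    | right i => rw [Fin.append_right]; exact Submodule.mem_sup_right (hvV i)
  · rw [append_eq_elim_comp]
    rw [linearIndependent_equiv finSumFinEquiv.symm]
    refine huli.sum_type hvli ?_
    rw [huspan, hvspan]
    exact disjoint_iff.mpr hUV
  · rw [append_eq_elim_comp, Set.range_comp, Set.range_eq_univ.mpr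
      finSumFinEquiv.symm.surjective, Set.image_univ, Set.Sum.elim_range,
      Submodule.span_union, huspan, hvspan]
  · intro i j hij
    induction i using Fin.addCases with
    | left i =>
      induction j using Fin.addCases with
      | left j =>
        rw [Fin.append_left, Fin.append_left]
        exact husm (by simp only [Fin.lt_def, Fin.coe_castAdd] at hij ⊢; exact hij)
      | right j =>
        rw [Fin.append_left, Fin.append_right]
        exact hsuv i j
    | right i =>
      induction j using Fin.addCases with
      | left j =>
        exfalso
        have : (j : ℕ) < a := j.isLt
        simp only [Fin.lt_def, Fin.coe_natAdd, Fin.coe_castAdd] at hij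
        omega
      | right j =>
        rw [Fin.append_right, Fin.append_right]
        exact hvsm (by simp only [Fin.lt_def, Fin.coe_natAdd] at hij ⊢; omega)
  · intro i
    induction i using Fin.addCases with
    | left i => rw [Fin.append_left, Fin.append_left]; exact hupiv i
    | right i => rw [Fin.append_right, Fin.append_right]; exact hvpiv i
end
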